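/- Let f ∈ ℝ with |f| ≥ 1 and t ∈ (-1, 1), and define â₁(t) = f(1-t²), â₂(t) = -ft√(1-t²), ζ̂(t) = f²(1-t²) + t/√(1-t²). Suppose the kernel condition (ζ̂(t)+dk²)² - 4|â(t)|²(ζ̂(t)+dk²) + 1 + 3|â(t)|⁴ = 0 holds for some k ∈ ℕ. Then f⁴(1-t²)² ≥ 1 (so |t| ≤ √(1-f^{-2})), and dk² = f²(1-t²) - t/√(1-t²) - σ√(f⁴(1-t²)²-1) for some σ ∈ {-1,1}. -/
import Mathlib


open Real

theorem stmt_17 (d f t : ℝ) (hd : d ≠ 0) (hf : 1 ≤ |f|)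
    (ht : t ∈ Set.Ioo (-1 : ℝ) 1) (k : ℕ) (hk : 1 ≤ k)
    (ζ : ℝ) (hζ : ζ = f ^ 2 * (1 - t ^ 2) + t / Real.sqrt (1 - t ^ 2))
    (hker : (ζ + d * (k : ℝ) ^ 2) ^ 2
      - 4 * (f ^ 2 * (1 - t ^ 2)) * (ζ + d * (k : ℝ) ^ 2)
      + 1 + 3 * (f ^ 2 * (1 - t ^ 2)) ^ 2 = 0) :
    1 ≤ f ^ 4 * (1 - t ^ 2) ^ 2 ∧
    |t| ≤ Real.sqrt (1 - 1 / f ^ 2) ∧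
    ∃ σ : ℝ, (σ = -1 ∨ σ = 1) ∧
      d * (k : ℝ) ^ 2 = f ^ 2 * (1 - t ^ 2) - t / Real.sqrt (1 - t ^ 2)
        - σ * Real.sqrt (f ^ 4 * (1 - t ^ 2) ^ 2 - 1) := by
  obtain ⟨ht1, ht2⟩ := ht
  set A : ℝ := f ^ 2 * (1 - t ^ 2) with hA
  set x : ℝ := ζ + d * (k : ℝ) ^ 2 with hx
  have hsq : (x - 2 * A) ^ 2 = A ^ 2 - 1 := by nlinarith [hker]
  have hA2 : 1 ≤ A ^ 2 := by nlinarith [sq_nonneg (x - 2 * A)]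
  have hA4 : A ^ 2 = f ^ 4 * (1 - t ^ 2) ^ 2 := by ring
  have h1 : 1 ≤ f ^ 4 * (1 - t ^ 2) ^ 2 := hA4 ▸ hA2
  have hApos : 0 < A := by
    have hf2 : 1 ≤ f ^ 2 := by nlinarith [abs_nonneg f, sq_abs f]
    have : 0 < 1 - t ^ 2 := by nlinarith
    positivity
  have hA1 : 1 ≤ A := by nlinarith
  have hf2 : (1 : ℝ) ≤ f ^ 2 := by nlinarith [abs_nonneg f, sq_abs f]
  have hf2pos : (0 : ℝ) < f ^ 2 := by linarith
  have ht2' : t ^ 2 ≤ 1 - 1 / f ^ 2 := by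
    have h : 1 / f ^ 2 ≤ 1 - t ^ 2 := by
      rw [div_le_iff₀ hf2pos]; nlinarith
    linarith
  refine ⟨h1, ?_, ?_⟩
  · calc |t| = Real.sqrt (t ^ 2) := (Real.sqrt_sq_eq_abs t).symm
      _ ≤ Real.sqrt (1 - 1 / f ^ 2) := Real.sqrt_le_sqrt ht2'
  · set s : ℝ := Real.sqrt (f ^ 4 * (1 - t ^ 2) ^ 2 - 1) with hs
    have hs2 : s ^ 2 = A ^ 2 - 1 := by
      rw [hs, Real.sq_sqrt (by linarith : (0:ℝ) ≤ f ^ 4 * (1 - t ^ 2) ^ 2 - 1), hA4]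
    have hfac : (x - 2 * A - s) * (x - 2 * A + s) = 0 := by
      linear_combination hsq - hs2
    rcases mul_eq_zero.mp hfac with h | h
    · exact ⟨-1, Or.inl rfl, by
        have : x = 2 * A + s := by linarith
        rw [hx, hζ] at this; linarith⟩
    · exact ⟨1, Or.inr rfl, by
        have : x = 2 * A - s := by linarith
        rw [hx, hζ] at this; linarith⟩
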